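/- Let G be a locally finite group of finite c-dimension k. Then G contains a finite subgroup H whose c-dimension is also equal to k. -/

import Mathlib

/-- A group is locally finite if every finitely generated subgroup is finite. -/
def LocallyFiniteGroup (G : Type*) [Group G] : Prop :=
  ∀ S : Finset G, Set.Finite (Subgroup.closure (S : Set G) : Set G)

/-- A group is locally soluble if every finitely generated subgroup is soluble. -/
def LocallySolvable (G : Type*) [Group G] : Prop :=
  ∀ S : Finset G, IsSolvable (Subgroup.closure (S : Set G))

/-- A group is locally nilpotent if every finitely generated subgroup is nilpotent. -/
def LocallyNilpotent (G : Type*) [Group G] : Prop :=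
  ∀ S : Finset G, Group.IsNilpotent (Subgroup.closure (S : Set G))

/-- A strictly increasing chain of centralizers of subsets, of length `n`
(i.e. with `n + 1` members). -/
def IsCentralizerChain {G : Type*} [Group G] {n : ℕ} (c : Fin (n + 1) → Subgroup G) : Prop :=
  StrictMono c ∧ ∀ i, ∃ S : Set G, c i = Subgroup.centralizer S

/-- The c-dimension of a group: the supremum of lengths of strict chains of
nested centralizers of subsets. -/
noncomputable def cdim (G : Type*) [Group G] : ℕ∞ :=
  ⨆ (n : ℕ) (_ : ∃ c : Fin (n + 1) → Subgroup G, IsCentralizerChain c), (n : ℕ∞)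

/-- `l(G)`: the supremum of lengths of strict chains of nested subgroups. -/
noncomputable def subgroupChainLength (G : Type*) [Group G] : ℕ∞ :=
  ⨆ (n : ℕ) (_ : ∃ c : Fin (n + 1) → Subgroup G, StrictMono c), (n : ℕ∞)

/-- The minimal condition on centralizers: there is no infinite strictly
descending chain of centralizers of subsets. -/
def MinimalConditionOnCentralizers (G : Type*) [Group G] : Prop :=
  ¬ ∃ c : ℕ → Subgroup G, StrictAnti c ∧ ∀ i, ∃ S : Set G, c i = Subgroup.centralizer S

/-- A minimal normal subgroup. -/
def IsMinimalNormal {G : Type*} [Group G] (N : Subgroup G) : Prop :=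
  N.Normal ∧ N ≠ ⊥ ∧ ∀ M : Subgroup G, M.Normal → M ≤ N → M = ⊥ ∨ M = N

theorem Subgroup.normal_iSup_of_normal {G : Type*} [Group G] {ι : Sort*} (S : ι → Subgroup G)
    (h : ∀ i, (S i).Normal) : (⨆ i, S i).Normal := by
  constructor
  intro x hx g
  refine Subgroup.iSup_induction S (C := fun y => g * y * g⁻¹ ∈ ⨆ i, S i) hx
    (fun i y hy => ?_) ?_ (fun y z hy hz => ?_)
  · exact Subgroup.mem_iSup_of_mem i ((h i).conj_mem y hy g)
  · simpa using (⨆ i, S i).one_mem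
  · have hm := mul_mem hy hz
    have heq : g * (y * z) * g⁻¹ = g * y * g⁻¹ * (g * z * g⁻¹) := by group
    show g * (y * z) * g⁻¹ ∈ ⨆ i, S i
    rw [heq]; exact hm

/-- The socle: the subgroup generated by all minimal normal subgroups. -/
def socle (G : Type*) [Group G] : Subgroup G :=
  ⨆ N : { N : Subgroup G // IsMinimalNormal N }, (N : Subgroup G)

instance socle_normal (G : Type*) [Group G] : (socle G).Normal :=
  Subgroup.normal_iSup_of_normal _ (fun N => N.2.1)

/-- A group is linear if it embeds in some `GL n F` for a field `F`. -/
def IsLinearGroup (G : Type*) [Group G] : Prop :=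
  ∃ (n : ℕ) (F : Type) (_ : Field F) (φ : G →* GL (Fin n) F), Function.Injective φ

/-- A subgroup is subnormal if there is a finite chain of successive normal
subgroups connecting it to the whole group. -/
def IsSubnormal {G : Type*} [Group G] (H : Subgroup G) : Prop :=
  ∃ (n : ℕ) (c : Fin (n + 1) → Subgroup G), c 0 = H ∧ c (Fin.last n) = ⊤ ∧
    ∀ i : Fin n, c i.castSucc ≤ c i.succ ∧ ((c i.castSucc).subgroupOf (c i.succ)).Normal

/-- A group is quasisimple if it is perfect and its central quotient is simple. -/
def IsQuasisimple (Q : Type*) [Group Q] : Prop :=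
  commutator Q = ⊤ ∧ IsSimpleGroup (Q ⧸ Subgroup.center Q)

/-- A component of a group: a subnormal quasisimple subgroup. -/
def IsComponent {G : Type*} [Group G] (Q : Subgroup G) : Prop :=
  IsSubnormal Q ∧ IsQuasisimple Q

/-- The layer `E(G)`: the subgroup generated by all components. -/
def layer (G : Type*) [Group G] : Subgroup G :=
  ⨆ Q : { Q : Subgroup G // IsComponent Q }, (Q : Subgroup G)

/-- `N` is the Hirsch–Plotkin radical of `G`: the largest normal locally
nilpotent subgroup. -/
def IsHirschPlotkinRadical (G : Type*) [Group G] (N : Subgroup G) : Prop :=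
  N.Normal ∧ LocallyNilpotent N ∧ ∀ M : Subgroup G, M.Normal → LocallyNilpotent M → M ≤ N


instance centralizer_subgroupOf_normalizer_normal {G : Type*} [Group G] (H : Subgroup G) :
    ((Subgroup.centralizer (H : Set G)).subgroupOf (Subgroup.normalizer (H : Set G))).Normal := by
  rw [← Subgroup.normalizerMonoidHom_ker]
  exact MonoidHom.normal_ker _

/-- For a group `E` acting on a group `Q` and `F ≤ E`, the set of points of `Q`
fixed by every element of `F`. -/
def fixedSet {E Q : Type*} [Monoid E] [Monoid Q] [MulDistribMulAction E Q]
    (F : Submonoid E) : Set Q :=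
  {q | ∀ f ∈ F, f • q = q}

/-- A group is an (internal) direct product of finitely many simple groups. -/
def IsDirectProductOfFinitelyManySimpleGroups (H : Type*) [Group H] : Prop :=
  ∃ (n : ℕ) (N : Fin n → Subgroup H), (∀ i, (N i).Normal) ∧ iSupIndep N ∧
    (⨆ i, N i) = ⊤ ∧ ∀ i, IsSimpleGroup (N i)

/-!
Every centralizer chain `c` of a subgroup `H ≤ G` lifts to `G`: as `c i = C_H(C_H(c i))`, it is
the trace on `H` of the chain `C_G(C_H(c i))`. Hence `cdim H ≤ cdim G`.

Conversely, in a centralizer chain `c 0 < ⋯ < c k` of `G` each step `c i < c (i+1)` is witnessed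
by some `x ∈ c (i+1) \ c i` and some `t ∈ C(c i)` not commuting with `x` (because
`c i = C(C(c i))`). In any subgroup `H` containing these `2k` elements the subgroups
`C_H(H ∩ C(c i))` form a strict centralizer chain of length `k`. By local finiteness the subgroup
generated by the witnesses is finite.
-/

namespace Subgroup

variable {G : Type*} [Group G]

lemma centralizer_centralizer_centralizer (s : Set G) :
    centralizer (centralizer (centralizer s : Set G) : Set G) = centralizer s :=
  SetLike.coe_injective (Set.centralizer_centralizer_centralizer s)

lemma centralizer_image_subgroupOf (H : Subgroup G) (s : Set H) :
    (centralizer ((↑) '' s : Set G)).subgroupOf H = centralizer s := by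
  ext x
  simp only [mem_subgroupOf, mem_centralizer_iff, Set.forall_mem_image, ← Subtype.ext_iff,
    ← Subgroup.coe_mul]

end Subgroup

section

open Subgroup

variable {G : Type*} [Group G]

lemma IsCentralizerChain.centralizer_centralizer {n : ℕ} {c : Fin (n + 1) → Subgroup G}
    (hc : IsCentralizerChain c) (i : Fin (n + 1)) :
    centralizer (centralizer (c i : Set G) : Set G) = c i := by
  obtain ⟨S, hS⟩ := hc.2 i
  rw [hS, centralizer_centralizer_centralizer]

lemma isCentralizerChain_const_top : IsCentralizerChain (fun _ : Fin 1 => (⊤ : Subgroup G)) :=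
  ⟨Subsingleton.strictMono (α := Fin 1) _, fun _ => ⟨∅, by ext; simp [mem_centralizer_iff]⟩⟩

lemma le_cdim_of_isCentralizerChain {n : ℕ} {c : Fin (n + 1) → Subgroup G}
    (hc : IsCentralizerChain c) : (n : ℕ∞) ≤ cdim G :=
  le_iSup₂ (f := fun (n : ℕ) (_ : ∃ c : Fin (n + 1) → Subgroup G, IsCentralizerChain c) =>
    (n : ℕ∞)) n ⟨c, hc⟩

lemma exists_isCentralizerChain_of_cdim_eq {k : ℕ} (hk : cdim G = k) :
    ∃ c : Fin (k + 1) → Subgroup G, IsCentralizerChain c := by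
  have : Nonempty {n : ℕ // ∃ c : Fin (n + 1) → Subgroup G, IsCentralizerChain c} :=
    ⟨⟨0, _, isCentralizerChain_const_top⟩⟩
  rw [cdim, iSup_subtype'] at hk
  obtain ⟨⟨n, hn⟩, hnk⟩ := ENat.exists_eq_iSup_of_lt_top (hk ▸ ENat.natCast_lt_top k)
  obtain rfl : n = k := by exact_mod_cast hnk.trans hk
  exact hn

lemma IsCentralizerChain.lift {H : Subgroup G} {n : ℕ} {c : Fin (n + 1) → Subgroup H}
    (hc : IsCentralizerChain c) :
    ∃ C : Fin (n + 1) → Subgroup G, IsCentralizerChain C := by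
  set C : Fin (n + 1) → Subgroup G :=
    fun i => centralizer ((↑) '' (centralizer (c i : Set H) : Set H))
  have hC : ∀ i, (C i).subgroupOf H = c i := fun i => by
    rw [centralizer_image_subgroupOf, hc.centralizer_centralizer]
  have hmono : Monotone C := fun i j hij =>
    centralizer_le (Set.image_mono (centralizer_le (hc.1.monotone hij)))
  have hinj : Function.Injective C := .of_comp (f := fun K : Subgroup G => K.subgroupOf H) <| by
    simpa only [Function.comp_def, hC] using hc.1.injective
  exact ⟨C, hmono.strictMono_of_injective hinj, fun i => ⟨_, rfl⟩⟩

lemma cdim_subgroup_le (H : Subgroup G) : cdim H ≤ cdim G :=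
  iSup₂_le fun _ ⟨_, hc⟩ => by
    obtain ⟨C, hC⟩ := hc.lift
    exact le_cdim_of_isCentralizerChain hC

lemma exists_pair_centralizer_lt {K L : Subgroup G}
    (hK : centralizer (centralizer (K : Set G) : Set G) = K) (hKL : K < L) :
    ∃ x t : G, ∀ H : Subgroup G, x ∈ H → t ∈ H →
      centralizer ((↑) ⁻¹' (centralizer (K : Set G) : Set G) : Set H) <
        centralizer ((↑) ⁻¹' (centralizer (L : Set G) : Set G)) := by
  obtain ⟨x, hxL, hxK⟩ := SetLike.exists_of_lt hKL
  rw [← hK, mem_centralizer_iff] at hxK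
  push Not at hxK
  obtain ⟨t, ht, htx⟩ := hxK
  refine ⟨x, t, fun H hx htH => SetLike.lt_iff_le_and_exists.2 ⟨?_, ⟨x, hx⟩, ?_, ?_⟩⟩
  · exact centralizer_le (Set.preimage_mono (centralizer_le hKL.le))
  · rw [mem_centralizer_iff]
    intro s hs
    exact Subtype.ext ((mem_centralizer_iff.1 hs) x hxL).symm
  · rw [mem_centralizer_iff]
    intro h
    exact htx (congrArg Subtype.val (h ⟨t, htH⟩ ht))

lemma IsCentralizerChain.exists_finset_restrict {n : ℕ} {c : Fin (n + 1) → Subgroup G}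
    (hc : IsCentralizerChain c) :
    ∃ F : Finset G, ∀ H : Subgroup G, (F : Set G) ⊆ H →
      ∃ d : Fin (n + 1) → Subgroup H, IsCentralizerChain d := by
  classical
  choose x t hxt using fun i : Fin n =>
    exists_pair_centralizer_lt (hc.centralizer_centralizer i.castSucc)
      (hc.1 (Fin.castSucc_lt_succ (i := i)))
  refine ⟨Finset.univ.image x ∪ Finset.univ.image t, fun H hF => ?_⟩
  refine ⟨fun i => centralizer ((↑) ⁻¹' (centralizer (c i : Set G) : Set G)),
    Fin.strictMono_iff_lt_succ.2 fun i => hxt i H (hF ?_) (hF ?_), fun i => ⟨_, rfl⟩⟩ <;> simp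

end

theorem exists_finite_subgroup_same_cdim
    (G : Type*) [Group G] (hG : LocallyFiniteGroup G) (k : ℕ) (hk : cdim G = (k : ℕ∞)) :
    ∃ H : Subgroup G, Finite H ∧ cdim H = (k : ℕ∞) := by
  obtain ⟨c, hc⟩ := exists_isCentralizerChain_of_cdim_eq hk
  obtain ⟨F, hF⟩ := hc.exists_finset_restrict
  refine ⟨Subgroup.closure F, (hG F).to_subtype, le_antisymm (hk ▸ cdim_subgroup_le _) ?_⟩
  obtain ⟨d, hd⟩ := hF _ Subgroup.subset_closure
  exact le_cdim_of_isCentralizerChain hd
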